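/- Let T ⊆ (2Ω)^{<ω} be a tree (where 2Ω = {(2n,2n+1) : n ∈ ω}) and define T⁺ = {σ⌢a : σ ∈ T, σ⌢a ∉ T, a ∈ ω ∪ Ω ∪ {∞}}. If T is well-founded, then T⁺ ∪ [T] = T⁺, and the lexicographic order on T⁺ (induced by the order 0 < (0,1) < 1 < (1,2) < ⋯ < ∞ on symbols) is a scattered linear order. -/
import Mathlib


/-- The symbols `ω ∪ Ω ∪ {∞}`: `fin n` is the natural number `n`, `pair n` is the
pair `(n, n+1) ∈ Ω`, and `infty` is `∞`. -/
inductive Symb : Type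
  | fin : ℕ → Symb
  | pair : ℕ → Symb
  | infty : Symb
deriving DecidableEq

/-- Position of a symbol in the order `0 < (0,1) < 1 < (1,2) < 2 < ⋯ < ∞`. -/
def Symb.val : Symb → WithTop ℕ
  | .fin n => ((2 * n : ℕ) : WithTop ℕ)
  | .pair n => ((2 * n + 1 : ℕ) : WithTop ℕ)
  | .infty => ⊤

theorem Symb.val_injective : Function.Injective Symb.val := by
  rintro (n | n | _) (m | m | _) h <;>
    simp only [Symb.val] at h <;>
    first
      | rfl
      | (norm_cast at h <;> first | (congr 1; omega) | (exact absurd h (by omega)))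

/-- The linear order `0 < (0,1) < 1 < (1,2) < 2 < ⋯ < ∞` on `ω ∪ Ω ∪ {∞}`. -/
instance : LinearOrder Symb := LinearOrder.lift' Symb.val Symb.val_injective

/-- A tree: a set of finite sequences closed under initial segments. -/
def IsTree {α : Type*} (T : Set (List α)) : Prop :=
  ∀ σ ∈ T, ∀ τ : List α, τ <+: σ → τ ∈ T

/-- `T⁺ = {σ⌢a : σ ∈ T, σ⌢a ∉ T}` where `a` ranges over all symbols of `ω ∪ Ω ∪ {∞}`. -/
def Tplus (T : Set (List Symb)) : Set (List Symb) :=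
  {l : List Symb | ∃ σ ∈ T, ∃ a : Symb, l = σ ++ [a] ∧ σ ++ [a] ∉ T}

/- ============ auxiliary lemmas ============ -/

lemma Symb.le_val_iff {x y : Symb} : x ≤ y ↔ x.val ≤ y.val := Iff.rfl

lemma lex_irrefl (l : List Symb) : ¬ List.Lex (· < ·) l l := by
  induction l with
  | nil => intro h; cases h
  | cons a l ih =>
    intro h
    cases h with
    | cons h => exact ih h
    | rel h => exact lt_irrefl a h

lemma lex_append (l t : List Symb) (ht : t ≠ []) : List.Lex (· < ·) l (l ++ t) := by
  induction l with
  | nil =>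
    cases t with
    | nil => exact absurd rfl ht
    | cons x t => exact List.Lex.nil
  | cons a l ih => exact List.Lex.cons ih

lemma lex_head (σ : List Symb) : ∀ {x y : Symb} {t1 t2 : List Symb},
    List.Lex (· < ·) (σ ++ x :: t1) (σ ++ y :: t2) → x ≤ y := by
  induction σ with
  | nil =>
    intro x y t1 t2 h
    cases h with
    | cons h => exact le_rfl
    | rel h => exact le_of_lt h
  | cons a σ ih =>
    intro x y t1 t2 h
    cases h with
    | cons h => exact ih h
    | rel h => exact absurd h (lt_irrefl a)

lemma getD_append_cons (σ : List Symb) (x : Symb) (t : List Symb) (d : Symb) :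
    (σ ++ x :: t).getD σ.length d = x := by
  induction σ with
  | nil => rfl
  | cons a σ ih => simpa using ih

lemma mem_T_aux (T : Set (List Symb)) (hTree : IsTree T) {l ρ : List Symb}
    (hl : l ∈ Tplus T) (h : ρ <+: l) (hne : ρ ≠ l) : ρ ∈ T := by
  obtain ⟨τ, hτ, aa, rfl, -⟩ := hl
  have hlen0 : ρ.length ≤ τ.length + 1 := by simpa using h.length_le
  have hlen : ρ.length ≤ τ.length := by
    rcases lt_or_eq_of_le hlen0 with h' | h'
    · omega
    · exact absurd (h.eq_of_length (by simpa using h')) hne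
  have hρτ : ρ <+: τ := by
    have h1 : ρ = (τ ++ [aa]).take ρ.length := List.prefix_iff_eq_take.mp h
    rw [List.take_append_of_le_length hlen] at h1
    exact h1 ▸ List.take_prefix _ _
  exact hTree τ hτ ρ hρτ

/-- if `T ⊆ (2Ω)^{<ω}` is a well-founded tree, then `T⁺ ∪ [T] = T⁺`
(that is, `[T]` is empty), and the lexicographic order on `T⁺` induced by the symbol order
`0 < (0,1) < 1 < (1,2) < ⋯ < ∞` is scattered: `ℚ` does not order-embed into it. -/
theorem wellFounded_Tplus_scattered (T : Set (List Symb)) (hTree : IsTree T)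
    (hdom : ∀ σ ∈ T, ∀ s ∈ σ, ∃ n : ℕ, s = Symb.pair (2 * n))
    (hwf : ¬ ∃ f : ℕ → Symb, ∀ n : ℕ, List.ofFn (fun i : Fin n => f i) ∈ T) :
    (∀ f : ℕ → Symb, ¬ ∀ n : ℕ, List.ofFn (fun i : Fin n => f i) ∈ T) ∧
      ¬ ∃ e : ℚ → List Symb, (∀ q : ℚ, e q ∈ Tplus T) ∧
          ∀ q r : ℚ, q < r → List.Lex (· < ·) (e q) (e r) := by
  refine ⟨fun f h => hwf ⟨f, h⟩, ?_⟩
  rintro ⟨e, he, hmono⟩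
  -- the empty string is in T
  obtain ⟨σ0, hσ0, a0, -, -⟩ := he 0
  have hnil : [] ∈ T := hTree σ0 hσ0 [] (List.nil_prefix)
  -- key step lemma
  have key : ∀ σ : List Symb, ∀ a b : ℚ, a < b → σ ∈ T →
      (∀ q, a < q → q < b → σ <+: e q) →
      ∃ s : Symb, ∃ a' b' : ℚ, a' < b' ∧ (σ ++ [s]) ∈ T ∧
        ∀ q, a' < q → q < b' → (σ ++ [s]) <+: e q := by
    intro σ a b hab hσT hpre
    -- Step 1: shrink so that no q maps exactly to σ
    obtain ⟨a1, b1, hab1, hmem, hne⟩ :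
        ∃ a1 b1 : ℚ, a1 < b1 ∧ (∀ q, a1 < q → q < b1 → a < q ∧ q < b) ∧
          (∀ q, a1 < q → q < b1 → e q ≠ σ) := by
      by_cases h : ∃ q0, a < q0 ∧ q0 < b ∧ e q0 = σ
      · obtain ⟨q0, h1, h2, h3⟩ := h
        refine ⟨q0, b, h2, fun q hq1 hq2 => ⟨h1.trans hq1, hq2⟩, fun q hq1 hq2 hq3 => ?_⟩
        have := hmono q0 q hq1
        rw [h3, hq3] at this
        exact lex_irrefl σ this
      · exact ⟨a, b, hab, fun q h1 h2 => ⟨h1, h2⟩, fun q h1 h2 h3 => h ⟨q, h1, h2, h3⟩⟩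
    -- every e q for q in (a1,b1) properly extends σ
    have hdec : ∀ q, a1 < q → q < b1 → ∃ x : Symb, ∃ t : List Symb, e q = σ ++ x :: t := by
      intro q h1 h2
      obtain ⟨hq1, hq2⟩ := hmem q h1 h2
      obtain ⟨t, ht⟩ := hpre q hq1 hq2
      cases t with
      | nil => exact absurd (by simpa using ht.symm) (hne q h1 h2)
      | cons x t => exact ⟨x, t, ht.symm⟩
    -- minimize the next symbol over the interval
    set S : Set (WithTop ℕ) :=
      {v | ∃ q, a1 < q ∧ q < b1 ∧ Symb.val ((e q).getD σ.length Symb.infty) = v} with hSdef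
    have hSne : S.Nonempty := ⟨_, (a1 + b1) / 2, by linarith, by linarith, rfl⟩
    obtain ⟨v, hvS, hvmin⟩ :=
      (IsWellFounded.wf (r := ((· < ·) : WithTop ℕ → WithTop ℕ → Prop))).has_min S hSne
    obtain ⟨qs, hqs1, hqs2, hqsv⟩ := hvS
    set s : Symb := (e qs).getD σ.length Symb.infty with hsdef
    -- on (a1, qs) all e q extend σ ++ [s]
    have hpref : ∀ q, a1 < q → q < qs → σ ++ [s] <+: e q := by
      intro q h1 h2
      obtain ⟨x, t, hx⟩ := hdec q h1 (h2.trans hqs2)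
      obtain ⟨y, t', hy⟩ := hdec qs hqs1 hqs2
      have hgx : (e q).getD σ.length Symb.infty = x := by
        rw [hx]; exact getD_append_cons σ x t Symb.infty
      have hgy : s = y := by
        rw [hsdef, hy]; exact getD_append_cons σ y t' Symb.infty
      have hxy : x ≤ s := by
        have h' := hmono q qs h2
        rw [hx, hy] at h'
        exact hgy ▸ lex_head σ h'
      have hsx : s ≤ x := by
        have hxS : Symb.val x ∈ S := ⟨q, h1, h2.trans hqs2, by rw [hgx]⟩
        have hnlt : ¬ Symb.val x < v := hvmin _ hxS
        rw [← hqsv] at hnlt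
        exact Symb.le_val_iff.mpr (not_lt.mp hnlt)
      have hxs : x = s := le_antisymm hxy hsx
      exact ⟨t, by rw [hx, hxs]; simp⟩
    -- σ ++ [s] ∈ T
    have hmemT : σ ++ [s] ∈ T := by
      have hq12 : (2 * a1 + qs) / 3 < (a1 + 2 * qs) / 3 := by linarith
      have hne12 : e ((2 * a1 + qs) / 3) ≠ e ((a1 + 2 * qs) / 3) := fun hEq =>
        lex_irrefl _ (hEq ▸ hmono _ _ hq12)
      obtain ⟨q, hq1, hq2, hqe⟩ : ∃ q, a1 < q ∧ q < qs ∧ e q ≠ σ ++ [s] := by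
        by_cases h : e ((2 * a1 + qs) / 3) = σ ++ [s]
        · exact ⟨(a1 + 2 * qs) / 3, by linarith, by linarith,
            fun hc => hne12 (h.trans hc.symm)⟩
        · exact ⟨(2 * a1 + qs) / 3, by linarith, by linarith, h⟩
      exact mem_T_aux T hTree (he q) (hpref q hq1 hq2) (Ne.symm hqe)
    exact ⟨s, a1, qs, hqs1, hmemT, hpref⟩
  -- build the infinite path
  let St := {p : List Symb × ℚ × ℚ //
    p.2.1 < p.2.2 ∧ p.1 ∈ T ∧ ∀ q, p.2.1 < q → q < p.2.2 → p.1 <+: e q}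
  have step : ∀ p : St, ∃ p' : St, ∃ s : Symb, p'.1.1 = p.1.1 ++ [s] := by
    rintro ⟨⟨σ, a, b⟩, hab, hT, hp⟩
    obtain ⟨s, a', b', h1, h2, h3⟩ := key σ a b hab hT hp
    exact ⟨⟨⟨σ ++ [s], a', b'⟩, h1, h2, h3⟩, s, rfl⟩
  choose next hnext using step
  have hnil01 : ((0 : ℚ) < 1 ∧ ([] : List Symb) ∈ T ∧
      ∀ q : ℚ, (0:ℚ) < q → q < 1 → ([] : List Symb) <+: e q) :=
    ⟨by norm_num, hnil, fun q _ _ => List.nil_prefix⟩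
  let p0 : St := ⟨⟨[], 0, 1⟩, hnil01⟩
  let seqp : ℕ → St := fun n => next^[n] p0
  have hseq : ∀ n, seqp (n + 1) = next (seqp n) := fun n =>
    Function.iterate_succ_apply' next n p0
  have hlen : ∀ n, (seqp n).1.1.length = n := by
    intro n
    induction n with
    | zero => rfl
    | succ n ih =>
      rw [hseq n]
      obtain ⟨s, hs⟩ := hnext (seqp n)
      rw [hs, List.length_append, ih]
      rfl
  let f : ℕ → Symb := fun n => (seqp (n + 1)).1.1.getD n Symb.infty
  have hofn : ∀ n, List.ofFn (fun i : Fin n => f i) = (seqp n).1.1 := by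
    intro n
    induction n with
    | zero => rfl
    | succ n ih =>
      obtain ⟨s, hs⟩ := hnext (seqp n)
      have hsn : (seqp (n + 1)).1.1 = (seqp n).1.1 ++ [s] := by rw [hseq n]; exact hs
      have hf : f n = s := by
        show (seqp (n + 1)).1.1.getD n Symb.infty = s
        have h' := getD_append_cons ((seqp n).1.1) s [] Symb.infty
        rw [hlen n] at h'
        rw [hsn]
        exact h'
      rw [List.ofFn_succ', hsn, ← ih]
      simp only [Fin.coe_castSucc, Fin.val_last, List.concat_eq_append, hf]
  exact hwf ⟨f, fun n => (hofn n) ▸ (seqp n).2.2.1⟩
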